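/- arXiv:2110.02767 — 3 statements merged into one kernel-verified Lean document; each statement's English description precedes it below -/
import Mathlib

section
/- Let f : U → (−1, 1) be a real-valued harmonic function on the unit disk. Then for all z ∈ U, |∇f(z)| ≤ (4/π) (1 − |f(z)|²)/(1 − |z|²). -/
open Metric Complex


lemma normSq_sin' (z : ℂ) : Complex.normSq (Complex.sin z) =
    Real.sin z.re ^ 2 + Real.sinh z.im ^ 2 := by
  rw [Complex.sin_eq, ← Complex.ofReal_sin, ← Complex.ofReal_cos, ← Complex.ofReal_sinh,
    ← Complex.ofReal_cosh, ← Complex.ofReal_mul, ← Complex.ofReal_mul,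
    Complex.normSq_add_mul_I]
  have h1 := Real.cosh_sq z.im
  have h2 := Real.sin_sq_add_cos_sq z.re
  nlinarith

lemma normSq_cos' (z : ℂ) : Complex.normSq (Complex.cos z) =
    Real.cos z.re ^ 2 + Real.sinh z.im ^ 2 := by
  have e : Complex.cos z = ((Real.cos z.re * Real.cosh z.im : ℝ) : ℂ)
      + ((-(Real.sin z.re * Real.sinh z.im) : ℝ) : ℂ) * I := by
    rw [Complex.cos_eq, ← Complex.ofReal_sin, ← Complex.ofReal_cos, ← Complex.ofReal_sinh,
      ← Complex.ofReal_cosh]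
    push_cast; ring
  rw [e, Complex.normSq_add_mul_I]
  have h1 := Real.cosh_sq z.im
  have h2 := Real.sin_sq_add_cos_sq z.re
  nlinarith

lemma key_trig {u : ℝ} (hu : |u| ≤ 1) : Real.cos (Real.pi / 2 * u) ≤ 1 - u ^ 2 := by
  wlog h0 : 0 ≤ u generalizing u
  · have := this (u := -u) (by rwa [abs_neg]) (by linarith [not_le.1 h0])
    simpa using this
  rw [abs_le] at hu
  have hsin : u * (Real.sqrt 2 / 2) ≤ Real.sin (Real.pi / 4 * u) := by
    have hc := strictConcaveOn_sin_Icc.concaveOn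
    have h4 : (0:ℝ) ≤ Real.pi / 4 := by positivity
    have hfun := hc.2
    have := hfun (x := 0) (y := Real.pi / 4) (Set.mem_Icc.2 ⟨le_rfl, Real.pi_pos.le⟩)
      (Set.mem_Icc.2 ⟨h4, by linarith [Real.pi_pos]⟩)
      (show (0:ℝ) ≤ 1 - u by linarith) h0 (by ring)
    simp only [smul_eq_mul, mul_zero, Real.sin_zero, zero_add, Real.sin_pi_div_four] at this
    calc u * (Real.sqrt 2 / 2) ≤ Real.sin (u * (Real.pi/4)) := this
    _ = Real.sin (Real.pi/4*u) := by ring_nf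
  have h2 : Real.cos (Real.pi / 2 * u) = 1 - 2 * Real.sin (Real.pi / 4 * u) ^ 2 := by
    have h := Real.cos_two_mul' (Real.pi / 4 * u)
    have h' := Real.cos_sq' (Real.pi / 4 * u)
    rw [show 2 * (Real.pi/4*u) = Real.pi/2*u by ring] at h
    linarith
  have hs2 : Real.sqrt 2 ^ 2 = 2 := Real.sq_sqrt (by norm_num)
  have hs0 : (0:ℝ) ≤ Real.sqrt 2 := Real.sqrt_nonneg 2
  have hu0 : 0 ≤ u * (Real.sqrt 2 / 2) := by positivity
  have := mul_le_mul hsin hsin hu0 (hu0.trans hsin)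
  nlinarith


lemma normSq_lt_one {a : ℂ} (ha : ‖a‖ < 1) : Complex.normSq a < 1 := by
  have := Complex.sq_norm a
  nlinarith [norm_nonneg a]

lemma mobius_ne {a w : ℂ} (ha : ‖a‖ < 1) (hw : ‖w‖ < 1) :
    1 - (starRingEnd ℂ) a * w ≠ 0 := by
  intro h
  have h1 : ‖(starRingEnd ℂ) a * w‖ < 1 := by
    rw [norm_mul, Complex.norm_conj]
    nlinarith [norm_nonneg a, norm_nonneg w]
  have : (starRingEnd ℂ) a * w = 1 := by linear_combination -h
  rw [this] at h1; simp at h1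

lemma mobius_mem {a w : ℂ} (ha : ‖a‖ < 1) (hw : ‖w‖ < 1) :
    ‖(w - a) / (1 - (starRingEnd ℂ) a * w)‖ < 1 := by
  rw [norm_div, div_lt_one (norm_pos_iff.mpr (mobius_ne ha hw))]
  have hkey : Complex.normSq (w - a) < Complex.normSq (1 - (starRingEnd ℂ) a * w) := by
    have ha2 := normSq_lt_one ha
    have hw2 := normSq_lt_one hw
    simp only [Complex.normSq_apply, Complex.sub_re, Complex.sub_im, Complex.one_re,
      Complex.one_im, Complex.mul_re, Complex.mul_im, Complex.conj_re, Complex.conj_im] at *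
    nlinarith [ha2, hw2]
  have h1 := Complex.sq_norm (w - a)
  have h2 := Complex.sq_norm (1 - (starRingEnd ℂ) a * w)
  nlinarith [norm_nonneg (w - a), norm_nonneg (1 - (starRingEnd ℂ) a * w)]

lemma schwarz_pick {g : ℂ → ℂ} (hg : DifferentiableOn ℂ g (ball 0 1))
    (hmaps : Set.MapsTo g (ball 0 1) (ball 0 1)) {z : ℂ} (hz : z ∈ ball (0:ℂ) 1) :
    ‖deriv g z‖ ≤ (1 - ‖g z‖ ^ 2) / (1 - ‖z‖ ^ 2) := by
  rw [mem_ball_zero_iff] at hz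
  have hz' : ‖z‖ < 1 := hz
  set b := g z with hb
  have hbz : ‖b‖ < 1 := by
    have := hmaps (mem_ball_zero_iff.2 hz')
    rwa [mem_ball_zero_iff] at this
  set τ : ℂ → ℂ := fun w => (w + z) / (1 + (starRingEnd ℂ) z * w) with hτdef
  set h : ℂ → ℂ := fun w => (g (τ w) - b) / (1 - (starRingEnd ℂ) b * g (τ w)) with hhdef
  have hτmem : ∀ w : ℂ, ‖w‖ < 1 → ‖τ w‖ < 1 := by
    intro w hw
    have := mobius_mem (a := -z) (by simpa using hz') hw
    simpa [hτdef, sub_neg_eq_add, map_neg] using this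
  have hgτmem : ∀ w : ℂ, ‖w‖ < 1 → ‖g (τ w)‖ < 1 := fun w hw =>
    mem_ball_zero_iff.1 (hmaps (mem_ball_zero_iff.2 (hτmem w hw)))
  have hτden : ∀ w : ℂ, ‖w‖ < 1 → 1 + (starRingEnd ℂ) z * w ≠ 0 := by
    intro w hw
    have := mobius_ne (a := -z) (w := w) (by simpa using hz') hw
    simpa [sub_neg_eq_add, map_neg] using this
  have hτderiv : ∀ w : ℂ, ‖w‖ < 1 →
      HasDerivAt τ ((1 * (1 + (starRingEnd ℂ) z * w) - (w + z) * ((starRingEnd ℂ) z * 1)) /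
        (1 + (starRingEnd ℂ) z * w) ^ 2) w := by
    intro w hw
    exact ((hasDerivAt_id w).add_const z).div
      (((hasDerivAt_id w).const_mul ((starRingEnd ℂ) z)).const_add 1) (hτden w hw)
  have hgτ : ∀ w : ℂ, ‖w‖ < 1 →
      HasDerivAt (fun y => g (τ y)) (deriv g (τ w) *
        ((1 * (1 + (starRingEnd ℂ) z * w) - (w + z) * ((starRingEnd ℂ) z * 1)) /
          (1 + (starRingEnd ℂ) z * w) ^ 2)) w := by
    intro w hw
    have hgd : DifferentiableAt ℂ g (τ w) :=
      hg.differentiableAt (isOpen_ball.mem_nhds (mem_ball_zero_iff.2 (hτmem w hw)))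
    exact hgd.hasDerivAt.comp w (hτderiv w hw)
  have hhderiv : ∀ w : ℂ, ‖w‖ < 1 →
      HasDerivAt h (((deriv g (τ w) *
        ((1 * (1 + (starRingEnd ℂ) z * w) - (w + z) * ((starRingEnd ℂ) z * 1)) /
          (1 + (starRingEnd ℂ) z * w) ^ 2)) * (1 - (starRingEnd ℂ) b * g (τ w)) -
        (g (τ w) - b) * (-((starRingEnd ℂ) b * (deriv g (τ w) *
        ((1 * (1 + (starRingEnd ℂ) z * w) - (w + z) * ((starRingEnd ℂ) z * 1)) /
          (1 + (starRingEnd ℂ) z * w) ^ 2))))) / (1 - (starRingEnd ℂ) b * g (τ w)) ^ 2) w := by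
    intro w hw
    have hne : 1 - (starRingEnd ℂ) b * g (τ w) ≠ 0 := mobius_ne hbz (hgτmem w hw)
    exact ((hgτ w hw).sub_const b).div
      ((((hgτ w hw).const_mul ((starRingEnd ℂ) b)).const_sub 1)) hne
  have hhdiff : DifferentiableOn ℂ h (ball 0 1) := fun w hw =>
    ((hhderiv w (mem_ball_zero_iff.1 hw)).differentiableAt).differentiableWithinAt
  have hτ0 : τ 0 = z := by simp [hτdef]
  have hh0 : h 0 = 0 := by simp [hhdef, hτ0, hb]
  have hhmaps : Set.MapsTo h (ball 0 1) (ball (h 0) 1) := by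
    intro w hw
    rw [hh0, mem_ball_zero_iff]
    exact mobius_mem hbz (hgτmem w (mem_ball_zero_iff.1 hw))
  have hineq := Complex.norm_deriv_le_div_of_mapsTo_ball hhdiff (hhmaps.mono_right ball_subset_closedBall) one_pos
  rw [(hhderiv 0 (by simp)).deriv, hτ0] at hineq
  have hne : 1 - (starRingEnd ℂ) b * b ≠ 0 := mobius_ne hbz hbz
  have e1 : ((deriv g z * ((1 * (1 + (starRingEnd ℂ) z * 0) - (0 + z) * ((starRingEnd ℂ) z * 1)) /
      (1 + (starRingEnd ℂ) z * 0) ^ 2)) * (1 - (starRingEnd ℂ) b * g z) -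
      (g z - b) * (-((starRingEnd ℂ) b * (deriv g z *
      ((1 * (1 + (starRingEnd ℂ) z * 0) - (0 + z) * ((starRingEnd ℂ) z * 1)) /
      (1 + (starRingEnd ℂ) z * 0) ^ 2))))) / (1 - (starRingEnd ℂ) b * g z) ^ 2
      = deriv g z * (1 - z * (starRingEnd ℂ) z) / (1 - b * (starRingEnd ℂ) b) := by
    rw [← hb, sub_self, zero_mul, sub_zero]
    simp only [mul_zero, add_zero, zero_add, one_mul, mul_one, one_pow, div_one]
    rw [sq, mul_div_assoc, div_mul_cancel_left₀ hne]
    rw [mul_comm b ((starRingEnd ℂ) b), div_eq_mul_inv]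
  rw [e1] at hineq
  rw [Complex.mul_conj, Complex.mul_conj, norm_div, norm_mul] at hineq
  have hA : ‖1 - (Complex.normSq z : ℂ)‖ = 1 - ‖z‖ ^ 2 := by
    rw [← Complex.ofReal_one, ← Complex.ofReal_sub, Complex.norm_real, Real.norm_eq_abs,
      _root_.abs_of_nonneg (by nlinarith [normSq_lt_one hz']), Complex.sq_norm]
  have hB : ‖1 - (Complex.normSq b : ℂ)‖ = 1 - ‖b‖ ^ 2 := by
    rw [← Complex.ofReal_one, ← Complex.ofReal_sub, Complex.norm_real, Real.norm_eq_abs,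
      _root_.abs_of_nonneg (by nlinarith [normSq_lt_one hbz]), Complex.sq_norm]
  rw [hA, hB] at hineq
  norm_num at hineq
  have hposA : (0:ℝ) < 1 - ‖z‖ ^ 2 := by nlinarith [norm_nonneg z]
  have hposB : (0:ℝ) < 1 - ‖b‖ ^ 2 := by nlinarith [norm_nonneg b]
  rw [div_le_one hposB] at hineq
  rw [le_div_iff₀ hposA]
  linarith

lemma strip_re {w : ℂ} : (((Real.pi/4 : ℝ) : ℂ) * w).re = Real.pi/4 * w.re := by
  simp [Complex.mul_re]

lemma strip_cos_pos {w : ℂ} (hw : |w.re| < 1) :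
    0 < Real.cos ((((Real.pi/4 : ℝ) : ℂ) * w).re) := by
  rw [strip_re]
  apply Real.cos_pos_of_mem_Ioo
  constructor <;> rw [abs_lt] at hw <;> nlinarith [Real.pi_pos]

lemma strip_cos_ne {w : ℂ} (hw : |w.re| < 1) :
    Complex.cos (((Real.pi/4 : ℝ) : ℂ) * w) ≠ 0 := by
  intro h
  have := normSq_cos' (((Real.pi/4 : ℝ) : ℂ) * w)
  rw [h] at this
  simp only [map_zero] at this
  nlinarith [strip_cos_pos hw, sq_nonneg (Real.sinh ((((Real.pi/4 : ℝ) : ℂ) * w).im))]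

lemma strip_normSq_cos_pos {w : ℂ} (hw : |w.re| < 1) :
    0 < Complex.normSq (Complex.cos (((Real.pi/4 : ℝ) : ℂ) * w)) := by
  rw [normSq_cos']
  nlinarith [strip_cos_pos hw, sq_nonneg (Real.sinh ((((Real.pi/4 : ℝ) : ℂ) * w).im))]

lemma strip_cos2 {w : ℂ} (hw : |w.re| < 1) :
    Real.cos ((((Real.pi/4 : ℝ) : ℂ) * w).re) ^ 2
    - Real.sin ((((Real.pi/4 : ℝ) : ℂ) * w).re) ^ 2 = Real.cos (Real.pi/2 * w.re) := by
  rw [← Real.cos_two_mul', strip_re]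
  ring_nf

lemma strip_tan_lt {w : ℂ} (hw : |w.re| < 1) :
    ‖Complex.tan (((Real.pi/4 : ℝ) : ℂ) * w)‖ < 1 := by
  set A := ((Real.pi/4 : ℝ) : ℂ) * w with hA
  have hN := strip_normSq_cos_pos hw
  have hsq : ‖Complex.tan A‖ ^ 2 < 1 := by
    rw [Complex.sq_norm, Complex.tan_eq_sin_div_cos, map_div₀, normSq_sin', normSq_cos',
      div_lt_one (by rw [normSq_cos'] at hN; exact hN)]
    have hcpos : 0 < Real.cos A.re := strip_cos_pos hw
    have h2 : 0 < Real.cos (Real.pi/2 * w.re) := by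
      apply Real.cos_pos_of_mem_Ioo
      constructor <;> rw [abs_lt] at hw <;> nlinarith [Real.pi_pos]
    have := strip_cos2 hw
    nlinarith
  nlinarith [norm_nonneg (Complex.tan A)]

/-- A real-valued harmonic function on the disk is represented as the real part of a
holomorphic function `F`; then `|∇f(z)| = |F'(z)|`. -/
theorem kalaj_vuorinen_gradient (F : ℂ → ℂ)
    (hF : DifferentiableOn ℂ F (ball 0 1))
    (f : ℂ → ℝ)
    (hfF : ∀ z ∈ ball (0:ℂ) 1, f z = (F z).re)
    (hb : ∀ z ∈ ball (0:ℂ) 1, |f z| < 1)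
    (z : ℂ) (hz : z ∈ ball (0:ℂ) 1) :
    ‖deriv F z‖ ≤ (4 / Real.pi) * (1 - (f z) ^ 2) / (1 - ‖z‖ ^ 2) := by
  set c : ℂ := ((Real.pi/4 : ℝ) : ℂ) with hcdef
  set g : ℂ → ℂ := fun w => Complex.tan (c * F w) with hgdef
  have hRe : ∀ w ∈ ball (0:ℂ) 1, |(F w).re| < 1 := fun w hw => (hfF w hw ▸ hb w hw)
  have hgd : ∀ w ∈ ball (0:ℂ) 1,
      HasDerivAt g (1 / Complex.cos (c * F w) ^ 2 * (c * deriv F w)) w := by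
    intro w hw
    have hFd : DifferentiableAt ℂ F w := hF.differentiableAt (isOpen_ball.mem_nhds hw)
    have h1 : HasDerivAt (fun y => c * F y) (c * deriv F w) w := hFd.hasDerivAt.const_mul c
    exact (Complex.hasDerivAt_tan (strip_cos_ne (hRe w hw))).comp w h1
  have hgdiff : DifferentiableOn ℂ g (ball 0 1) := fun w hw =>
    ((hgd w hw).differentiableAt).differentiableWithinAt
  have hgmaps : Set.MapsTo g (ball 0 1) (ball 0 1) := by
    intro w hw
    rw [mem_ball_zero_iff]
    exact strip_tan_lt (hRe w hw)
  have SP := schwarz_pick hgdiff hgmaps hz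
  rw [(hgd z hz).deriv] at SP
  set N := Complex.normSq (Complex.cos (c * F z)) with hNdef
  have hN : 0 < N := strip_normSq_cos_pos (hRe z hz)
  have hD : 0 < 1 - ‖z‖ ^ 2 := by
    rw [mem_ball_zero_iff] at hz
    nlinarith [norm_nonneg z]
  have hL : ‖1 / Complex.cos (c * F z) ^ 2 * (c * deriv F z)‖
      = Real.pi/4 * ‖deriv F z‖ / N := by
    rw [norm_mul, norm_div, norm_one, norm_pow, norm_mul, hcdef, Complex.norm_real, Real.norm_eq_abs,
      abs_of_pos (by positivity : (0:ℝ) < Real.pi/4), Complex.sq_norm, ← hNdef]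
    ring
  have hR : 1 - ‖g z‖ ^ 2 = Real.cos (Real.pi/2 * (F z).re) / N := by
    have hNe : N = Real.cos ((c * F z).re) ^ 2 + Real.sinh ((c * F z).im) ^ 2 := by
      rw [hNdef, normSq_cos']
    have e2 := strip_cos2 (hRe z hz)
    rw [show g z = Complex.tan (c * F z) from rfl, Complex.sq_norm,
      Complex.tan_eq_sin_div_cos, map_div₀, normSq_sin', ← hNdef]
    rw [eq_div_iff hN.ne', sub_mul, div_mul_cancel₀ _ hN.ne', one_mul]
    rw [← e2, hNe]
    ring
  rw [hL, hR, ← hfF z hz] at SP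
  have key := key_trig (u := f z) (le_of_lt (hb z hz))
  have P0 : (0:ℝ) ≤ ‖deriv F z‖ := norm_nonneg _
  rw [div_div, div_le_div_iff₀ hN (mul_pos hN hD)] at SP
  have step1 : Real.pi/4 * (‖deriv F z‖ * (1 - ‖z‖ ^ 2))
      ≤ Real.cos (Real.pi/2 * f z) := by nlinarith [SP, hN]
  have step2 : Real.pi/4 * (‖deriv F z‖ * (1 - ‖z‖ ^ 2))
      ≤ 1 - f z ^ 2 := step1.trans key
  rw [le_div_iff₀ hD]
  have h6 := mul_le_mul_of_nonneg_left step2 (show (0:ℝ) ≤ 4/Real.pi by positivity)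
  have h7 : (4/Real.pi) * (Real.pi/4 * (‖deriv F z‖ * (1 - ‖z‖ ^ 2)))
      = ‖deriv F z‖ * (1 - ‖z‖ ^ 2) := by
    field_simp
  linarith
end

section
/- Let f = h + conj(g) : U → 𝔹ⁿ be a harmonic mapping of the unit disk into the Euclidean unit ball of ℂⁿ, with h, g holomorphic. Then for all z ∈ U, ‖h'(z)‖_e² + ‖g'(z)‖_e² ≤ (1 − ‖f(z)‖_e²)/(1 − |z|²)². -/
open Metric Complex

lemma circleMap_mem_ball_one {r : ℝ} (hr0 : 0 < r) (hr1 : r < 1) (θ : ℝ) :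
    circleMap 0 r θ ∈ ball (0:ℂ) 1 := by
  simp only [mem_ball_zero_iff, norm_circleMap_zero]
  rwa [abs_of_pos hr0]

lemma meanvalue {q : ℂ → ℂ} (hq : DifferentiableOn ℂ q (ball 0 1)) {r : ℝ}
    (hr0 : 0 < r) (hr1 : r < 1) :
    ∫ θ in (0:ℝ)..(2*Real.pi), q (circleMap 0 r θ) = ((2*Real.pi : ℝ) : ℂ) * q 0 := by
  have hsub : closedBall (0:ℂ) r ⊆ ball 0 1 := closedBall_subset_ball hr1
  have hd : DiffContOnCl ℂ q (ball 0 r) := by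
    refine ⟨hq.mono (ball_subset_ball hr1.le), (hq.continuousOn.mono ?_)⟩
    rw [closure_ball (0:ℂ) hr0.ne']
    exact hsub
  have h0 : (0:ℂ) ∈ ball (0:ℂ) r := mem_ball_self hr0
  have key := hd.circleIntegral_sub_inv_smul h0
  simp only [circleIntegral, deriv_circleMap, sub_zero, smul_eq_mul] at key
  have hcongr : ∀ θ ∈ Set.uIcc (0:ℝ) (2*Real.pi),
      circleMap 0 r θ * I * ((circleMap 0 r θ)⁻¹ * q (circleMap 0 r θ))
        = I * q (circleMap 0 r θ) := by
    intro θ _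
    have h : circleMap 0 r θ ≠ 0 := circleMap_ne_center hr0.ne'
    field_simp
  rw [intervalIntegral.integral_congr hcongr, intervalIntegral.integral_const_mul] at key
  have h2 : I * ∫ θ in (0:ℝ)..(2*Real.pi), q (circleMap 0 r θ)
      = I * (((2*Real.pi : ℝ) : ℂ) * q 0) := key.trans (by push_cast; ring)
  exact mul_left_cancel₀ I_ne_zero h2

lemma meanvalue_re {q : ℂ → ℂ} (hq : DifferentiableOn ℂ q (ball 0 1)) {r : ℝ}
    (hr0 : 0 < r) (hr1 : r < 1) :
    ∫ θ in (0:ℝ)..(2*Real.pi), (q (circleMap 0 r θ)).re = 2*Real.pi * (q 0).re := by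
  have hcont : Continuous fun θ : ℝ => q (circleMap 0 r θ) :=
    hq.continuousOn.comp_continuous (continuous_circleMap 0 r)
      (circleMap_mem_ball_one hr0 hr1)
  have := Complex.reCLM.intervalIntegral_comp_comm
    (hcont.intervalIntegrable (0:ℝ) (2*Real.pi)) (μ := MeasureTheory.volume)
  simp only [Complex.reCLM_apply] at this
  rw [this, meanvalue hq hr0 hr1]
  simp

lemma taylor2 {H : ℂ → ℂ} (hH : DifferentiableOn ℂ H (ball 0 1)) :
    ∃ R : ℂ → ℂ, DifferentiableOn ℂ R (ball 0 1) ∧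
      ∀ w, H w = H 0 + deriv H 0 * w + w ^ 2 * R w := by
  have hmem : ball (0:ℂ) 1 ∈ nhds (0:ℂ) := ball_mem_nhds 0 one_pos
  refine ⟨dslope (dslope H 0) 0,
    (Complex.differentiableOn_dslope hmem).mpr
      ((Complex.differentiableOn_dslope hmem).mpr hH), fun w => ?_⟩
  have h1 : w * dslope H 0 w = H w - H 0 := by
    simpa using sub_smul_dslope H 0 w
  have h2 : w * dslope (dslope H 0) 0 w = dslope H 0 w - deriv H 0 := by
    simpa [dslope_same] using sub_smul_dslope (dslope H 0) 0 w
  linear_combination (-1 : ℂ) * h1 + (-w) * h2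

lemma core {H G : ℂ → ℂ} (hH : DifferentiableOn ℂ H (ball 0 1))
    (hG : DifferentiableOn ℂ G (ball 0 1)) {r : ℝ} (hr0 : 0 < r) (hr1 : r < 1) :
    2*Real.pi * (‖H 0 + (starRingEnd ℂ) (G 0)‖^2
       + r^2 * (‖deriv H 0‖^2 + ‖deriv G 0‖^2))
    ≤ ∫ θ in (0:ℝ)..(2*Real.pi),
        ‖H (circleMap 0 r θ) + (starRingEnd ℂ) (G (circleMap 0 r θ))‖^2 := by
  obtain ⟨R, hR, hHeq⟩ := taylor2 hH
  obtain ⟨S, hS, hGeq⟩ := taylor2 hG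
  set Q : ℂ → ℂ := fun w =>
    (starRingEnd ℂ) (H 0) * deriv H 0 * w + (starRingEnd ℂ) (H 0) * w^2 * R w
      + (r:ℂ)^2 * (starRingEnd ℂ) (deriv H 0) * w * R w
      + (starRingEnd ℂ) (G 0) * deriv G 0 * w + (starRingEnd ℂ) (G 0) * w^2 * S w
      + (r:ℂ)^2 * (starRingEnd ℂ) (deriv G 0) * w * S w
      + H w * G w with hQdef
  have hQ : DifferentiableOn ℂ Q (ball 0 1) := by
    apply DifferentiableOn.add
    apply DifferentiableOn.add
    apply DifferentiableOn.add
    apply DifferentiableOn.add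
    apply DifferentiableOn.add
    apply DifferentiableOn.add
    · exact (differentiableOn_id.const_mul _)
    · exact ((differentiableOn_id.pow 2).const_mul _).mul hR
    · exact (differentiableOn_id.const_mul _).mul hR
    · exact (differentiableOn_id.const_mul _)
    · exact ((differentiableOn_id.pow 2).const_mul _).mul hS
    · exact (differentiableOn_id.const_mul _).mul hS
    · exact hH.mul hG
  have hQ0 : Q 0 = H 0 * G 0 := by simp [hQdef]
  have hpt : ∀ θ : ℝ,
      ‖H (circleMap 0 r θ) + (starRingEnd ℂ) (G (circleMap 0 r θ))‖^2
      = (‖H 0‖^2 + ‖G 0‖^2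
          + r^2*(‖deriv H 0‖^2 + ‖deriv G 0‖^2))
        + r^4 * (‖R (circleMap 0 r θ)‖^2 + ‖S (circleMap 0 r θ)‖^2)
        + 2 * (Q (circleMap 0 r θ)).re := by
    intro θ
    set w := circleMap 0 r θ with hwdef
    have hw : w * (starRingEnd ℂ) w = (r:ℂ)^2 := by
      rw [Complex.mul_conj, Complex.normSq_eq_norm_sq, hwdef, norm_circleMap_zero, abs_of_pos hr0]
      push_cast
      ring
    have hcx : (H w + (starRingEnd ℂ) (G w)) * (starRingEnd ℂ) (H w + (starRingEnd ℂ) (G w))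
        = H 0 * (starRingEnd ℂ) (H 0) + G 0 * (starRingEnd ℂ) (G 0)
          + (r:ℂ)^2 * (deriv H 0 * (starRingEnd ℂ) (deriv H 0)
              + deriv G 0 * (starRingEnd ℂ) (deriv G 0))
          + (r:ℂ)^4 * (R w * (starRingEnd ℂ) (R w) + S w * (starRingEnd ℂ) (S w))
          + (Q w + (starRingEnd ℂ) (Q w)) := by
      simp only [hQdef]
      rw [hHeq w, hGeq w]
      simp only [map_add, map_mul, map_pow, Complex.conj_conj, Complex.conj_ofReal]
      linear_combination (deriv H 0 * (starRingEnd ℂ) (deriv H 0)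
          + deriv H 0 * (starRingEnd ℂ) w * (starRingEnd ℂ) (R w)
          + (w * (starRingEnd ℂ) w + (r:ℂ)^2) * R w * (starRingEnd ℂ) (R w)
          + (starRingEnd ℂ) (deriv H 0) * w * R w
          + deriv G 0 * (starRingEnd ℂ) (deriv G 0)
          + deriv G 0 * (starRingEnd ℂ) w * (starRingEnd ℂ) (S w)
          + (w * (starRingEnd ℂ) w + (r:ℂ)^2) * S w * (starRingEnd ℂ) (S w)
          + (starRingEnd ℂ) (deriv G 0) * w * S w) * hw
    simp only [Complex.mul_conj, Complex.add_conj] at hcx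
    have hreal : Complex.normSq (H w + (starRingEnd ℂ) (G w))
        = Complex.normSq (H 0) + Complex.normSq (G 0)
          + r^2*(Complex.normSq (deriv H 0) + Complex.normSq (deriv G 0))
          + r^4*(Complex.normSq (R w) + Complex.normSq (S w)) + 2*(Q w).re := by
      exact_mod_cast hcx
    simp only [Complex.sq_norm]
    linarith [hreal]
  have hcont : ∀ (F : ℂ → ℂ), DifferentiableOn ℂ F (ball 0 1) →
      Continuous fun θ : ℝ => F (circleMap 0 r θ) := fun F hF =>
    hF.continuousOn.comp_continuous (continuous_circleMap 0 r)
      (circleMap_mem_ball_one hr0 hr1)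
  have hcontA : Continuous fun θ : ℝ =>
      ‖R (circleMap 0 r θ)‖^2 + ‖S (circleMap 0 r θ)‖^2 :=
    ((continuous_norm.comp (hcont R hR)).pow 2).add
      ((continuous_norm.comp (hcont S hS)).pow 2)
  have hcontB : Continuous fun θ : ℝ => (Q (circleMap 0 r θ)).re :=
    Complex.continuous_re.comp (hcont Q hQ)
  set K : ℝ := ‖H 0‖^2 + ‖G 0‖^2
      + r^2*(‖deriv H 0‖^2 + ‖deriv G 0‖^2) with hK
  rw [intervalIntegral.integral_congr (g := fun θ =>
      K + r^4 * (‖R (circleMap 0 r θ)‖^2 + ‖S (circleMap 0 r θ)‖^2)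
        + 2*(Q (circleMap 0 r θ)).re) (fun θ _ => hpt θ)]
  have hI12 : IntervalIntegrable (fun θ : ℝ =>
      K + r^4 * (‖R (circleMap 0 r θ)‖^2 + ‖S (circleMap 0 r θ)‖^2))
      MeasureTheory.volume 0 (2*Real.pi) :=
    (continuous_const.add (continuous_const.mul hcontA)).intervalIntegrable _ _
  have hI3 : IntervalIntegrable (fun θ : ℝ => 2*(Q (circleMap 0 r θ)).re)
      MeasureTheory.volume 0 (2*Real.pi) := (continuous_const.mul hcontB).intervalIntegrable _ _
  rw [intervalIntegral.integral_add hI12 hI3,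
    intervalIntegral.integral_add (f := fun _ => K) (g := fun θ : ℝ =>
        r^4 * (‖R (circleMap 0 r θ)‖^2 + ‖S (circleMap 0 r θ)‖^2))
      (continuous_const.intervalIntegrable _ _)
      ((continuous_const.mul hcontA).intervalIntegrable _ _),
    intervalIntegral.integral_const, intervalIntegral.integral_const_mul,
    intervalIntegral.integral_const_mul, meanvalue_re hQ hr0 hr1, hQ0]
  have hAnn : 0 ≤ ∫ θ in (0:ℝ)..(2*Real.pi),
      (‖R (circleMap 0 r θ)‖^2 + ‖S (circleMap 0 r θ)‖^2) :=
    intervalIntegral.integral_nonneg (by positivity) (fun u _ => by positivity)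
  have habs0 : ‖H 0 + (starRingEnd ℂ) (G 0)‖^2
      = ‖H 0‖^2 + ‖G 0‖^2 + 2*(H 0 * G 0).re := by
    simp only [Complex.sq_norm]
    rw [Complex.normSq_add, Complex.normSq_conj, Complex.conj_conj]
  have hprod : 0 ≤ r^4 * ∫ θ in (0:ℝ)..(2*Real.pi),
      (‖R (circleMap 0 r θ)‖^2 + ‖S (circleMap 0 r θ)‖^2) :=
    mul_nonneg (by positivity) hAnn
  simp only [sub_zero, smul_eq_mul]
  rw [habs0, hK]
  linarith

lemma norm_sq_eq {n : ℕ} (x : EuclideanSpace ℂ (Fin n)) :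
    ‖x‖^2 = ∑ j, ‖x j‖^2 := by
  rw [EuclideanSpace.norm_eq, Real.sq_sqrt (Finset.sum_nonneg fun j _ => by positivity)]

lemma base {n : ℕ} (h g f : ℂ → EuclideanSpace ℂ (Fin n))
    (hh : DifferentiableOn ℂ h (ball 0 1))
    (hg : DifferentiableOn ℂ g (ball 0 1))
    (hf : ∀ z ∈ ball (0:ℂ) 1, f z = fun j => h z j + (starRingEnd ℂ) (g z j))
    (hfb : ∀ z ∈ ball (0:ℂ) 1, ‖f z‖ < 1) :
    ‖deriv h 0‖ ^ 2 + ‖deriv g 0‖ ^ 2 ≤ 1 - ‖f 0‖ ^ 2 := by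
  have hcomph : ∀ j, DifferentiableOn ℂ (fun w => h w j) (ball 0 1) := fun j =>
    (EuclideanSpace.proj j (𝕜 := ℂ)).differentiable.comp_differentiableOn hh
  have hcompg : ∀ j, DifferentiableOn ℂ (fun w => g w j) (ball 0 1) := fun j =>
    (EuclideanSpace.proj j (𝕜 := ℂ)).differentiable.comp_differentiableOn hg
  have hderh : ∀ j, deriv (fun w => h w j) 0 = deriv h 0 j := by
    intro j
    have hd : HasDerivAt h (deriv h 0) 0 :=
      (hh.differentiableAt (ball_mem_nhds 0 one_pos)).hasDerivAt
    exact ((EuclideanSpace.proj j (𝕜 := ℂ)).hasFDerivAt.comp_hasDerivAt 0 hd).deriv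
  have hderg : ∀ j, deriv (fun w => g w j) 0 = deriv g 0 j := by
    intro j
    have hd : HasDerivAt g (deriv g 0) 0 :=
      (hg.differentiableAt (ball_mem_nhds 0 one_pos)).hasDerivAt
    exact ((EuclideanSpace.proj j (𝕜 := ℂ)).hasFDerivAt.comp_hasDerivAt 0 hd).deriv
  set D : ℝ := ‖deriv h 0‖ ^ 2 + ‖deriv g 0‖ ^ 2 with hD
  have key : ∀ r : ℝ, 0 < r → r < 1 → r^2 * D ≤ 1 - ‖f 0‖^2 := by
    intro r hr0 hr1
    have hcore := fun j : Fin n => core (hcomph j) (hcompg j) hr0 hr1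
    have hcont_j : ∀ j : Fin n, Continuous (fun θ : ℝ =>
        ‖h (circleMap 0 r θ) j + (starRingEnd ℂ) (g (circleMap 0 r θ) j)‖^2) := by
      intro j
      have hc : ∀ (u : ℂ → EuclideanSpace ℂ (Fin n)), DifferentiableOn ℂ u (ball 0 1) →
          Continuous fun θ : ℝ => u (circleMap 0 r θ) j := by
        intro u hu
        have := hu.continuousOn.comp_continuous (continuous_circleMap 0 r)
          (circleMap_mem_ball_one hr0 hr1)
        exact (EuclideanSpace.proj j (𝕜 := ℂ)).continuous.comp this
      exact (continuous_norm.comp ((hc h hh).add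
        (Complex.continuous_conj.comp (hc g hg)))).pow 2
    have hsum : ∑ j : Fin n, (∫ θ in (0:ℝ)..(2*Real.pi),
        ‖h (circleMap 0 r θ) j + (starRingEnd ℂ) (g (circleMap 0 r θ) j)‖^2)
        = ∫ θ in (0:ℝ)..(2*Real.pi), ∑ j : Fin n,
            ‖h (circleMap 0 r θ) j + (starRingEnd ℂ) (g (circleMap 0 r θ) j)‖^2 :=
      (intervalIntegral.integral_finset_sum
        (fun j _ => (hcont_j j).intervalIntegrable _ _)).symm
    have hptle : ∀ θ ∈ Set.Icc (0:ℝ) (2*Real.pi), ∑ j : Fin n,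
        ‖h (circleMap 0 r θ) j + (starRingEnd ℂ) (g (circleMap 0 r θ) j)‖^2 ≤ 1 := by
      intro θ _
      have hmem := circleMap_mem_ball_one hr0 hr1 θ
      have heq : ∑ j : Fin n, ‖h (circleMap 0 r θ) j
          + (starRingEnd ℂ) (g (circleMap 0 r θ) j)‖^2 = ‖f (circleMap 0 r θ)‖^2 := by
        rw [norm_sq_eq, hf _ hmem]
      rw [heq]
      exact (pow_lt_one₀ (norm_nonneg _) (hfb _ hmem) two_ne_zero).le
    have hintle : (∫ θ in (0:ℝ)..(2*Real.pi), ∑ j : Fin n,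
        ‖h (circleMap 0 r θ) j + (starRingEnd ℂ) (g (circleMap 0 r θ) j)‖^2)
        ≤ ∫ _ in (0:ℝ)..(2*Real.pi), (1:ℝ) :=
      intervalIntegral.integral_mono_on Real.two_pi_pos.le
        ((continuous_finset_sum _ (fun j _ => hcont_j j)).intervalIntegrable _ _)
        (continuous_const.intervalIntegrable _ _) hptle
    have hfn : ‖f 0‖^2 = ∑ j : Fin n, ‖h 0 j + (starRingEnd ℂ) (g 0 j)‖^2 := by
      rw [norm_sq_eq, hf 0 (mem_ball_self one_pos)]
    have hDn : D = ∑ j : Fin n, (‖deriv (fun w => h w j) 0‖^2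
        + ‖deriv (fun w => g w j) 0‖^2) := by
      simp only [hderh, hderg]
      rw [hD, norm_sq_eq (deriv h 0), norm_sq_eq (deriv g 0), Finset.sum_add_distrib]
    have hbig : 2*Real.pi * (‖f 0‖^2 + r^2 * D)
        = ∑ j : Fin n, 2*Real.pi*(‖h 0 j + (starRingEnd ℂ) (g 0 j)‖^2
            + r^2*(‖deriv (fun w => h w j) 0‖^2
              + ‖deriv (fun w => g w j) 0‖^2)) := by
      rw [hfn, hDn]
      simp only [mul_add, Finset.mul_sum, Finset.sum_add_distrib]
    have hmain : 2*Real.pi * (‖f 0‖^2 + r^2 * D) ≤ 2*Real.pi := by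
      rw [hbig]
      calc _ ≤ ∑ j : Fin n, ∫ θ in (0:ℝ)..(2*Real.pi),
            ‖h (circleMap 0 r θ) j + (starRingEnd ℂ) (g (circleMap 0 r θ) j)‖^2 :=
          Finset.sum_le_sum (fun j _ => hcore j)
        _ = _ := hsum
        _ ≤ ∫ _ in (0:ℝ)..(2*Real.pi), (1:ℝ) := hintle
        _ = 2*Real.pi := by simp
    have h2 : ‖f 0‖^2 + r^2*D ≤ 1 :=
      le_of_mul_le_mul_left (by linarith [hmain]) Real.two_pi_pos
    linarith
  have htend : Filter.Tendsto (fun r : ℝ => r^2 * D) (nhdsWithin 1 (Set.Iio 1)) (nhds D) := by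
    have hc : Filter.Tendsto (fun r : ℝ => r^2 * D) (nhds 1) (nhds (1^2 * D)) :=
      ((continuous_pow 2).mul continuous_const).tendsto 1
    rw [one_pow, one_mul] at hc
    exact hc.mono_left nhdsWithin_le_nhds
  refine le_of_tendsto htend ?_
  filter_upwards [Ioo_mem_nhdsLT_of_mem (Set.mem_Ioc.mpr ⟨one_pos, le_refl 1⟩)] with r hr
  exact key r hr.1 hr.2

theorem harmonic_schwarz_pick_disk_ball {n : ℕ}
    (h g f : ℂ → EuclideanSpace ℂ (Fin n))
    (hh : DifferentiableOn ℂ h (ball 0 1))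
    (hg : DifferentiableOn ℂ g (ball 0 1))
    (hf : ∀ z ∈ ball (0:ℂ) 1, f z = fun j => h z j + (starRingEnd ℂ) (g z j))
    (hfb : ∀ z ∈ ball (0:ℂ) 1, ‖f z‖ < 1)
    (z : ℂ) (hz : z ∈ ball (0:ℂ) 1) :
    ‖deriv h z‖ ^ 2 + ‖deriv g z‖ ^ 2 ≤
      (1 - ‖f z‖ ^ 2) / (1 - ‖z‖ ^ 2) ^ 2 := by
  have hz1 : ‖z‖ < 1 := by rwa [mem_ball_zero_iff] at hz
  set φ : ℂ → ℂ := fun w => (w + z) / (1 + (starRingEnd ℂ) z * w) with hφ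
  have hden : ∀ w ∈ ball (0:ℂ) 1, 1 + (starRingEnd ℂ) z * w ≠ 0 := by
    intro w hw
    have hw1 : ‖w‖ < 1 := by rwa [mem_ball_zero_iff] at hw
    have habs : ‖(starRingEnd ℂ) z * w‖ < 1 := by
      rw [norm_mul, Complex.norm_conj]
      nlinarith [norm_nonneg z, norm_nonneg w]
    intro hcontra
    have hx : (starRingEnd ℂ) z * w = -1 := by linear_combination hcontra
    rw [hx] at habs
    simp at habs
  have hmaps : ∀ w ∈ ball (0:ℂ) 1, φ w ∈ ball (0:ℂ) 1 := by
    intro w hw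
    have hw1 : ‖w‖ < 1 := by rwa [mem_ball_zero_iff] at hw
    have hid : Complex.normSq (1 + (starRingEnd ℂ) z * w) - Complex.normSq (w + z)
        = (1 - Complex.normSq z) * (1 - Complex.normSq w) := by
      simp only [Complex.normSq_apply, Complex.add_re, Complex.add_im, Complex.mul_re,
        Complex.mul_im, Complex.conj_re, Complex.conj_im, Complex.one_re, Complex.one_im]
      ring
    have h1 : Complex.normSq z < 1 := by
      rw [Complex.normSq_eq_norm_sq]; nlinarith [norm_nonneg z]
    have h2 : Complex.normSq w < 1 := by
      rw [Complex.normSq_eq_norm_sq]; nlinarith [norm_nonneg w]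
    have hlt : Complex.normSq (w + z) < Complex.normSq (1 + (starRingEnd ℂ) z * w) := by
      nlinarith
    have hpos : 0 < ‖1 + (starRingEnd ℂ) z * w‖ :=
      norm_pos_iff.mpr (hden w hw)
    rw [mem_ball_zero_iff, hφ]
    simp only [norm_div]
    rw [div_lt_one hpos]
    have := Real.sqrt_lt_sqrt (Complex.normSq_nonneg _) hlt
    rwa [← Complex.norm_def, ← Complex.norm_def] at this
  have hφd : DifferentiableOn ℂ φ (ball 0 1) := by
    intro w hw
    exact ((differentiableAt_id.add_const z).div
      ((differentiableAt_id.const_mul ((starRingEnd ℂ) z)).const_add 1)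
      (hden w hw)).differentiableWithinAt
  have hφ0 : φ 0 = z := by simp [hφ]
  have hφder : HasDerivAt φ (1 - z * (starRingEnd ℂ) z) 0 := by
    have hu : HasDerivAt (fun w : ℂ => w + z) 1 0 := (hasDerivAt_id 0).add_const z
    have hv : HasDerivAt (fun w : ℂ => 1 + (starRingEnd ℂ) z * w) ((starRingEnd ℂ) z) 0 := by
      simpa using (((hasDerivAt_id 0).const_mul ((starRingEnd ℂ) z)).const_add 1)
    have hv0 : (1 + (starRingEnd ℂ) z * 0) ≠ 0 := by simp
    have hdiv := hu.div hv hv0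
    simpa [hφ, Pi.div_def] using hdiv
  have hdh : HasDerivAt h (deriv h z) z :=
    (hh.differentiableAt (isOpen_ball.mem_nhds hz)).hasDerivAt
  have hdg : HasDerivAt g (deriv g z) z :=
    (hg.differentiableAt (isOpen_ball.mem_nhds hz)).hasDerivAt
  have hch : HasDerivAt (h ∘ φ) ((1 - z * (starRingEnd ℂ) z) • deriv h z) 0 :=
    HasDerivAt.scomp 0 (by rwa [hφ0]) hφder
  have hcg : HasDerivAt (g ∘ φ) ((1 - z * (starRingEnd ℂ) z) • deriv g z) 0 :=
    HasDerivAt.scomp 0 (by rwa [hφ0]) hφder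
  have hh' : DifferentiableOn ℂ (h ∘ φ) (ball 0 1) := hh.comp hφd hmaps
  have hg' : DifferentiableOn ℂ (g ∘ φ) (ball 0 1) := hg.comp hφd hmaps
  have hf' : ∀ w ∈ ball (0:ℂ) 1, (f ∘ φ) w
      = fun j => (h ∘ φ) w j + (starRingEnd ℂ) ((g ∘ φ) w j) := by
    intro w hw
    simpa [Function.comp] using hf (φ w) (hmaps w hw)
  have hfb' : ∀ w ∈ ball (0:ℂ) 1, ‖(f ∘ φ) w‖ < 1 := fun w hw => hfb (φ w) (hmaps w hw)
  have hbase := base (h ∘ φ) (g ∘ φ) (f ∘ φ) hh' hg' hf' hfb'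
  rw [hch.deriv, hcg.deriv] at hbase
  have hfz : (f ∘ φ) 0 = f z := by simp [Function.comp, hφ0]
  rw [hfz] at hbase
  have hco : (1 : ℂ) - z * (starRingEnd ℂ) z = ((1 - ‖z‖^2 : ℝ) : ℂ) := by
    rw [Complex.mul_conj, Complex.normSq_eq_norm_sq]
    push_cast
    ring
  have ht : ‖z‖ ^ 2 < 1 := by nlinarith [norm_nonneg z]
  have hnrm : ‖(1 : ℂ) - z * (starRingEnd ℂ) z‖ = 1 - ‖z‖^2 := by
    rw [hco, Complex.norm_real, Real.norm_eq_abs, _root_.abs_of_nonneg (by linarith)]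
  rw [norm_smul, norm_smul, hnrm] at hbase
  rw [le_div_iff₀ (by nlinarith)]
  nlinarith [hbase, norm_nonneg (deriv h z), norm_nonneg (deriv g z)]
end

section
/- Let H₁, H₂ be complex Hilbert spaces with open unit balls B₁, B₂, and let f : B₁ → B₂ be a pluriharmonic mapping that is C¹ at a point z₀ ∈ ∂B₁ with f(z₀) = w₀ ∈ ∂B₂. If λ ∈ ℝ is the constant such that Df(z₀)*w₀ = λ z₀ (which exists), then λ ≥ max{ 2/π − ‖f(0)‖, (1 − Re⟨f(0), w₀⟩)/2 }. -/
open Metric Set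

/-- A complex-valued function on the unit disk is harmonic if it can be written as
`h + conj g` with `h`, `g` holomorphic on the disk. -/
def IsHarmonicOnDisk (φ : ℂ → ℂ) : Prop :=
  ∃ h g : ℂ → ℂ, DifferentiableOn ℂ h (ball 0 1) ∧ DifferentiableOn ℂ g (ball 0 1) ∧
    ∀ ζ ∈ ball (0:ℂ) 1, φ ζ = h ζ + (starRingEnd ℂ) (g ζ)

section Aux

open Complex Filter Topology

lemma my_core {x : ℝ} (h0 : 0 ≤ x) (h2 : x < Real.pi/2) :
    x * Real.cos x ≤ Real.sin x := by
  rcases eq_or_lt_of_le h0 with h | h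
  · simp [← h]
  · have ht := Real.lt_tan h h2
    have hc : 0 < Real.cos x := Real.cos_pos_of_mem_Ioo ⟨by linarith [Real.pi_pos], h2⟩
    rw [Real.tan_eq_sin_div_cos, lt_div_iff₀ hc] at ht
    linarith

lemma my_cot1 {θ : ℝ} (h1 : 0 < θ) (h2 : θ < Real.pi/2) :
    1 + Real.pi/2 - 2*θ ≤ Real.cos θ / Real.sin θ := by
  have hpi := Real.pi_pos
  have hs : 0 < Real.sin θ := Real.sin_pos_of_pos_of_lt_pi h1 (by linarith)
  rw [le_div_iff₀ hs]
  have hsq : (0:ℝ) < Real.sqrt 2 / 2 := by positivity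
  rcases le_or_gt θ (Real.pi/4) with hle | hlt
  · obtain ⟨t, ht0, ht4, hθt⟩ : ∃ t, 0 ≤ t ∧ t < Real.pi/2 ∧ θ = Real.pi/4 - t :=
      ⟨Real.pi/4 - θ, by linarith, by linarith, by ring⟩
    have hcost : Real.cos θ = (Real.cos t + Real.sin t) * (Real.sqrt 2 / 2) := by
      rw [hθt, Real.cos_sub, Real.cos_pi_div_four, Real.sin_pi_div_four]; ring
    have hsint : Real.sin θ = (Real.cos t - Real.sin t) * (Real.sqrt 2 / 2) := by
      rw [hθt, Real.sin_sub, Real.cos_pi_div_four, Real.sin_pi_div_four]; ring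
    have hkey : t * Real.cos t ≤ Real.sin t := my_core ht0 ht4
    have hsin0 : 0 ≤ Real.sin t := Real.sin_nonneg_of_nonneg_of_le_pi ht0 (by linarith)
    have hmain : (1 + 2*t) * (Real.cos t - Real.sin t) ≤ Real.cos t + Real.sin t := by
      nlinarith [mul_nonneg ht0 hsin0]
    calc (1 + Real.pi/2 - 2*θ) * Real.sin θ
        = ((1 + 2*t) * (Real.cos t - Real.sin t)) * (Real.sqrt 2/2) := by
          rw [hsint, hθt]; ring
      _ ≤ (Real.cos t + Real.sin t) * (Real.sqrt 2/2) :=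
          mul_le_mul_of_nonneg_right hmain hsq.le
      _ = Real.cos θ := hcost.symm
  · obtain ⟨s, hs0, hs4, hθs⟩ : ∃ s, 0 < s ∧ s < Real.pi/4 ∧ θ = Real.pi/4 + s :=
      ⟨θ - Real.pi/4, by linarith, by linarith, by ring⟩
    have hcost : Real.cos θ = (Real.cos s - Real.sin s) * (Real.sqrt 2 / 2) := by
      rw [hθs, Real.cos_add, Real.cos_pi_div_four, Real.sin_pi_div_four]; ring
    have hsint : Real.sin θ = (Real.cos s + Real.sin s) * (Real.sqrt 2 / 2) := by
      rw [hθs, Real.sin_add, Real.cos_pi_div_four, Real.sin_pi_div_four]; ring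
    have hsins : Real.sin s ≤ s := Real.sin_le hs0.le
    have hcoss : 1 - s^2/2 ≤ Real.cos s := Real.one_sub_sq_div_two_le_cos
    have hs1 : s < 1 := by nlinarith [Real.pi_lt_d2]
    have hsin0 : 0 ≤ Real.sin s := Real.sin_nonneg_of_nonneg_of_le_pi hs0.le (by linarith)
    have h5 : Real.sin s * (1 - s) ≤ s * (1 - s) := by nlinarith
    have h6 : s * (1 - s) ≤ s * Real.cos s := by nlinarith
    have hmain : (1 - 2*s) * (Real.cos s + Real.sin s) ≤ Real.cos s - Real.sin s := by
      nlinarith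
    calc (1 + Real.pi/2 - 2*θ) * Real.sin θ
        = ((1 - 2*s) * (Real.cos s + Real.sin s)) * (Real.sqrt 2/2) := by
          rw [hsint, hθs]; ring
      _ ≤ (Real.cos s - Real.sin s) * (Real.sqrt 2/2) :=
          mul_le_mul_of_nonneg_right hmain hsq.le
      _ = Real.cos θ := hcost.symm

lemma my_cot2 {θ : ℝ} (h1 : 0 < θ) (h2 : θ < Real.pi/2) :
    Real.pi/2 - θ ≤ Real.cos θ / Real.sin θ := by
  have hpi := Real.pi_pos
  have hs : 0 < Real.sin θ := Real.sin_pos_of_pos_of_lt_pi h1 (by linarith)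
  rw [le_div_iff₀ hs]
  have hx0 : 0 ≤ Real.pi/2 - θ := by linarith
  have hx2 : Real.pi/2 - θ < Real.pi/2 := by linarith
  have := my_core hx0 hx2
  rw [Real.cos_pi_div_two_sub, Real.sin_pi_div_two_sub] at this
  linarith


lemma my_normSq_cos (z : ℂ) :
    (Complex.normSq (Complex.cos z) : ℝ) = (Real.cosh (2*z.im) + Real.cos (2*z.re))/2 := by
  have h : ((Complex.normSq (Complex.cos z) : ℝ) : ℂ)
      = ((Real.cosh (2*z.im) + Real.cos (2*z.re) : ℝ) : ℂ)/2 := by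
    rw [← Complex.mul_conj, ← Complex.cos_conj]
    have key : Complex.cos z * Complex.cos ((starRingEnd ℂ) z)
        = (Complex.cos (z - (starRingEnd ℂ) z) + Complex.cos (z + (starRingEnd ℂ) z))/2 := by
      rw [Complex.cos_sub, Complex.cos_add]; ring
    rw [key, Complex.sub_conj, Complex.add_conj, Complex.cos_mul_I, ← Complex.ofReal_cosh,
      ← Complex.ofReal_cos]
    push_cast
    ring
  exact_mod_cast h

lemma my_normSq_sin (z : ℂ) :
    (Complex.normSq (Complex.sin z) : ℝ) = (Real.cosh (2*z.im) - Real.cos (2*z.re))/2 := by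
  have h : ((Complex.normSq (Complex.sin z) : ℝ) : ℂ)
      = ((Real.cosh (2*z.im) - Real.cos (2*z.re) : ℝ) : ℂ)/2 := by
    rw [← Complex.mul_conj, ← Complex.sin_conj]
    have key : Complex.sin z * Complex.sin ((starRingEnd ℂ) z)
        = (Complex.cos (z - (starRingEnd ℂ) z) - Complex.cos (z + (starRingEnd ℂ) z))/2 := by
      rw [Complex.cos_sub, Complex.cos_add]; ring
    rw [key, Complex.sub_conj, Complex.add_conj, Complex.cos_mul_I, ← Complex.ofReal_cosh,
      ← Complex.ofReal_cos]
    push_cast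
    ring
  exact_mod_cast h


lemma my_norm_lt_of_normSq {x y : ℂ} (h : Complex.normSq x < Complex.normSq y) : ‖x‖ < ‖y‖ := by
  rw [← Complex.sq_norm, ← Complex.sq_norm] at h
  have hx : (0:ℝ) ≤ ‖x‖ := norm_nonneg x
  have hy : (0:ℝ) ≤ ‖y‖ := norm_nonneg y
  nlinarith

lemma my_normSq_lt_one {x : ℂ} (h : ‖x‖ < 1) : Complex.normSq x < 1 := by
  rw [← Complex.sq_norm]
  nlinarith [norm_nonneg x, h]

lemma my_schwarz_pick {F : ℂ → ℂ} (hd : DifferentiableOn ℂ F (ball 0 1))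
    (hm : MapsTo F (ball 0 1) (ball 0 1)) {r : ℝ} (h0 : 0 ≤ r) (h1 : r < 1) :
    ‖deriv F (r:ℂ)‖ * (1 - r^2) ≤ 1 - Complex.normSq (F (r:ℂ)) := by
  have hrball : (r:ℂ) ∈ ball (0:ℂ) 1 := by
    simp only [mem_ball_zero_iff, Complex.norm_real, Real.norm_eq_abs]
    rw [_root_.abs_of_nonneg h0]; exact h1
  set b := F (r:ℂ) with hbdef
  have hbball : b ∈ ball (0:ℂ) 1 := hm hrball
  have hnb : Complex.normSq b < 1 := my_normSq_lt_one (mem_ball_zero_iff.mp hbball)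
  have hnb0 : (0:ℝ) ≤ Complex.normSq b := Complex.normSq_nonneg b
  set M : ℂ → ℂ := fun ζ => ((r:ℂ) + ζ)/(1 + (r:ℂ)*ζ) with hMdef
  set q : ℂ → ℂ := fun w => (w - b)/(1 - (starRingEnd ℂ) b * w) with hqdef
  set G : ℂ → ℂ := fun ζ => q (F (M ζ)) with hGdef
  -- normSq identities
  have hSqM : ∀ ζ : ℂ, Complex.normSq (1 + (r:ℂ)*ζ) - Complex.normSq ((r:ℂ) + ζ)
      = (1 - r^2) * (1 - Complex.normSq ζ) := by
    intro ζ
    simp only [Complex.normSq_apply, Complex.add_re, Complex.add_im, Complex.mul_re,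
      Complex.mul_im, Complex.one_re, Complex.one_im, Complex.ofReal_re, Complex.ofReal_im]
    ring
  have hSqq : ∀ w : ℂ, Complex.normSq (1 - (starRingEnd ℂ) b * w) - Complex.normSq (w - b)
      = (1 - Complex.normSq b) * (1 - Complex.normSq w) := by
    intro w
    simp only [Complex.normSq_apply, Complex.sub_re, Complex.sub_im, Complex.mul_re,
      Complex.mul_im, Complex.one_re, Complex.one_im, Complex.conj_re, Complex.conj_im]
    ring
  -- denominators nonzero
  have hden1 : ∀ ζ ∈ ball (0:ℂ) 1, (1 + (r:ℂ)*ζ) ≠ 0 := by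
    intro ζ hζ hcon
    have hζ1 : Complex.normSq ζ < 1 := my_normSq_lt_one (mem_ball_zero_iff.mp hζ)
    have := hSqM ζ
    rw [hcon] at this
    simp only [map_zero] at this
    nlinarith [Complex.normSq_nonneg ((r:ℂ) + ζ),
      mul_pos (show (0:ℝ) < 1 - r^2 by nlinarith) (show (0:ℝ) < 1 - Complex.normSq ζ by linarith)]
  have hden2 : ∀ w ∈ ball (0:ℂ) 1, (1 - (starRingEnd ℂ) b * w) ≠ 0 := by
    intro w hw hcon
    have hw1 : Complex.normSq w < 1 := my_normSq_lt_one (mem_ball_zero_iff.mp hw)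
    have := hSqq w
    rw [hcon] at this
    simp only [map_zero] at this
    nlinarith [Complex.normSq_nonneg (w - b)]
  -- M maps ball to ball
  have hMmaps : MapsTo M (ball 0 1) (ball 0 1) := by
    intro ζ hζ
    have hζ1 : Complex.normSq ζ < 1 := my_normSq_lt_one (mem_ball_zero_iff.mp hζ)
    rw [mem_ball_zero_iff]
    have hlt : ‖(r:ℂ) + ζ‖ < ‖1 + (r:ℂ)*ζ‖ := by
      apply my_norm_lt_of_normSq
      nlinarith [hSqM ζ, hζ1,
        mul_pos (show (0:ℝ) < 1 - r^2 by nlinarith) (show (0:ℝ) < 1 - Complex.normSq ζ by linarith)]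
    have hpos : 0 < ‖1 + (r:ℂ)*ζ‖ := norm_pos_iff.mpr (hden1 ζ hζ)
    show ‖((r:ℂ) + ζ)/(1 + (r:ℂ)*ζ)‖ < 1
    rw [norm_div, div_lt_one hpos]
    exact hlt
  -- q maps ball to ball
  have hqmaps : ∀ w ∈ ball (0:ℂ) 1, q w ∈ ball (0:ℂ) 1 := by
    intro w hw
    have hw1 : Complex.normSq w < 1 := my_normSq_lt_one (mem_ball_zero_iff.mp hw)
    rw [mem_ball_zero_iff]
    have hlt : ‖w - b‖ < ‖1 - (starRingEnd ℂ) b * w‖ := by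
      apply my_norm_lt_of_normSq
      nlinarith [hSqq w,
        mul_pos (show (0:ℝ) < 1 - Complex.normSq b by linarith) (show (0:ℝ) < 1 - Complex.normSq w by linarith)]
    have hpos : 0 < ‖1 - (starRingEnd ℂ) b * w‖ := norm_pos_iff.mpr (hden2 w hw)
    show ‖(w - b)/(1 - (starRingEnd ℂ) b * w)‖ < 1
    rw [norm_div, div_lt_one hpos]
    exact hlt
  -- G properties
  have hGmaps : MapsTo G (ball 0 1) (ball 0 1) := fun ζ hζ => hqmaps _ (hm (hMmaps hζ))
  have hM0 : M 0 = (r:ℂ) := by simp [hMdef]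
  have hG0 : G 0 = 0 := by
    rw [hGdef]
    simp only [hM0, ← hbdef, hqdef]
    simp
  have hGdiff : DifferentiableOn ℂ G (ball 0 1) := by
    intro ζ hζ
    have hFM : DifferentiableAt ℂ (fun ζ => F (M ζ)) ζ := by
      have hMd : DifferentiableAt ℂ M ζ := by
        apply DifferentiableAt.div
        · exact (differentiableAt_id.const_add _)
        · exact (differentiableAt_id.const_mul _).const_add 1
        · exact hden1 ζ hζ
      exact (hd.differentiableAt (isOpen_ball.mem_nhds (hMmaps hζ))).comp ζ hMd
    have : DifferentiableAt ℂ G ζ := by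
      apply DifferentiableAt.div
      · exact hFM.sub_const b
      · exact ((hFM.const_mul _).const_sub 1)
      · exact hden2 _ (hm (hMmaps hζ))
    exact this.differentiableWithinAt
  -- derivative of G at 0
  set d := deriv F (r:ℂ) with hddef
  have hF : HasDerivAt F d (r:ℂ) :=
    (hd.differentiableAt (isOpen_ball.mem_nhds hrball)).hasDerivAt
  have hMder : HasDerivAt M (1 - (r:ℂ)^2) 0 := by
    have hn : HasDerivAt (fun ζ : ℂ => (r:ℂ) + ζ) 1 0 := (hasDerivAt_id 0).const_add _
    have hdd : HasDerivAt (fun ζ : ℂ => 1 + (r:ℂ)*ζ) (r:ℂ) 0 := by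
      simpa using ((hasDerivAt_id (0:ℂ)).const_mul (r:ℂ)).const_add 1
    have h0' : (1 + (r:ℂ)*(0:ℂ)) ≠ 0 := by simp
    have := hn.div hdd h0'
    refine this.congr_deriv ?_
    simp
    ring
  have hFM : HasDerivAt (fun ζ => F (M ζ)) (d * (1 - (r:ℂ)^2)) 0 := by
    have : HasDerivAt F d (M 0) := by rwa [hM0]
    exact this.comp 0 hMder
  have hqder : HasDerivAt q ((1 - (Complex.normSq b : ℂ))⁻¹) b := by
    have hn : HasDerivAt (fun w : ℂ => w - b) 1 b := (hasDerivAt_id b).sub_const b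
    have hdd : HasDerivAt (fun w : ℂ => 1 - (starRingEnd ℂ) b * w) (-(starRingEnd ℂ) b) b := by
      simpa using ((hasDerivAt_id b).const_mul ((starRingEnd ℂ) b)).const_sub 1
    have hbsq : (starRingEnd ℂ) b * b = (Complex.normSq b : ℂ) := by
      rw [mul_comm]; exact Complex.mul_conj b
    have h0' : (1 - (starRingEnd ℂ) b * b) ≠ 0 := by
      rw [hbsq]
      intro hcon
      have : (Complex.normSq b : ℂ) = 1 := by linear_combination -hcon
      have := congrArg Complex.re this
      simp at this
      linarith
    have := hn.div hdd h0'
    refine this.congr_deriv ?_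
    rw [hbsq]
    have h1' : (1 - (Complex.normSq b : ℂ)) ≠ 0 := by rwa [hbsq] at h0'
    field_simp
    ring
  have hGder : HasDerivAt G ((1 - (Complex.normSq b : ℂ))⁻¹ * (d * (1 - (r:ℂ)^2))) 0 := by
    have : HasDerivAt q ((1 - (Complex.normSq b : ℂ))⁻¹) (F (M 0)) := by rwa [hM0, ← hbdef]
    exact this.comp 0 hFM
  -- Schwarz lemma
  have hG0ball : MapsTo G (ball 0 1) (ball (G 0) 1) := by rwa [hG0]
  have hsch := Complex.norm_deriv_le_div_of_mapsTo_ball hGdiff (hG0ball.mono_right ball_subset_closedBall) one_pos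
  rw [hGder.deriv] at hsch
  -- unfold norms
  have hnorm : ‖(1 - (Complex.normSq b : ℂ))⁻¹ * (d * (1 - (r:ℂ)^2))‖
      = (1 - Complex.normSq b)⁻¹ * (‖d‖ * (1 - r^2)) := by
    have e1 : (1 - (Complex.normSq b : ℂ)) = ((1 - Complex.normSq b : ℝ) : ℂ) := by push_cast; ring
    have e2 : (1 - (r:ℂ)^2) = ((1 - r^2 : ℝ) : ℂ) := by push_cast; ring
    rw [norm_mul, norm_mul, e1, e2, norm_inv, Complex.norm_real, Complex.norm_real,
      Real.norm_of_nonneg (by linarith), Real.norm_of_nonneg (by nlinarith)]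
  rw [hnorm] at hsch
  have hpos : 0 < 1 - Complex.normSq b := by linarith
  rw [inv_mul_le_iff₀ hpos] at hsch
  simpa using hsch


lemma my_strip_facts {w : ℂ} (h : |w.re| < Real.pi/4) :
    Complex.cos w ≠ 0 ∧ ‖Complex.tan w‖ < 1 ∧
      (1 - Complex.normSq (Complex.tan w)) * Complex.normSq (Complex.cos w)
        = Real.cos (2*w.re) := by
  have hpi := Real.pi_pos
  have hcos2 : 0 < Real.cos (2*w.re) := by
    apply Real.cos_pos_of_mem_Ioo
    constructor
    · rcases abs_lt.mp h with ⟨h1, h2⟩; linarith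
    · rcases abs_lt.mp h with ⟨h1, h2⟩; linarith
  have hcosh : (1:ℝ) ≤ Real.cosh (2*w.im) := Real.one_le_cosh _
  have hnc : 0 < Complex.normSq (Complex.cos w) := by
    rw [my_normSq_cos]; linarith
  have hcne : Complex.cos w ≠ 0 := by
    intro hcon
    rw [hcon] at hnc; simp at hnc
  have htan : Complex.normSq (Complex.tan w) =
      Complex.normSq (Complex.sin w) / Complex.normSq (Complex.cos w) := by
    rw [Complex.tan_eq_sin_div_cos, Complex.normSq_div]
  have hlt : Complex.normSq (Complex.sin w) < Complex.normSq (Complex.cos w) := by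
    rw [my_normSq_cos, my_normSq_sin]; linarith
  refine ⟨hcne, ?_, ?_⟩
  · have : Complex.normSq (Complex.tan w) < 1 := by
      rw [htan, div_lt_one hnc]; exact hlt
    have h2 := Complex.sq_norm (Complex.tan w)
    nlinarith [norm_nonneg (Complex.tan w)]
  · rw [htan, my_normSq_cos, my_normSq_sin]
    field_simp
    ring

lemma my_grad_bound {H : ℂ → ℂ} (hd : DifferentiableOn ℂ H (ball 0 1))
    (hre : ∀ ζ ∈ ball (0:ℂ) 1, |(H ζ).re| < 1) {r : ℝ} (h0 : 0 ≤ r) (h1 : r < 1) :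
    Real.pi/4 * (‖deriv H (r:ℂ)‖ * (1 - r^2)) ≤ Real.cos (Real.pi/2 * (H (r:ℂ)).re) := by
  have hpi := Real.pi_pos
  have hrball : (r:ℂ) ∈ ball (0:ℂ) 1 := by
    simp only [mem_ball_zero_iff, Complex.norm_real, Real.norm_eq_abs]
    rw [_root_.abs_of_nonneg h0]; exact h1
  set c : ℂ := ((Real.pi/4 : ℝ) : ℂ) with hcdef
  set F : ℂ → ℂ := fun ζ => Complex.tan (c * H ζ) with hFdef
  have hwre : ∀ ζ : ℂ, (c * H ζ).re = Real.pi/4 * (H ζ).re := by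
    intro ζ
    rw [hcdef]
    simp [Complex.mul_re]
  have hwlt : ∀ ζ ∈ ball (0:ℂ) 1, |(c * H ζ).re| < Real.pi/4 := by
    intro ζ hζ
    rw [hwre, abs_mul, _root_.abs_of_nonneg (by positivity : (0:ℝ) ≤ Real.pi/4)]
    calc Real.pi/4 * |(H ζ).re| < Real.pi/4 * 1 := by
          apply mul_lt_mul_of_pos_left (hre ζ hζ) (by positivity)
      _ = Real.pi/4 := by ring
  -- F maps ball into ball
  have hFmaps : MapsTo F (ball 0 1) (ball 0 1) := by
    intro ζ hζ
    rw [mem_ball_zero_iff]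
    exact (my_strip_facts (hwlt ζ hζ)).2.1
  -- F differentiable
  have hFdiff : DifferentiableOn ℂ F (ball 0 1) := by
    intro ζ hζ
    have hcne := (my_strip_facts (hwlt ζ hζ)).1
    have h1' : DifferentiableAt ℂ Complex.tan (c * H ζ) :=
      (Complex.hasDerivAt_tan hcne).differentiableAt
    have h2' : DifferentiableAt ℂ (fun ζ => c * H ζ) ζ :=
      (hd.differentiableAt (isOpen_ball.mem_nhds hζ)).const_mul c
    exact (h1'.comp ζ h2').differentiableWithinAt
  -- derivative of F at r
  set d := deriv H (r:ℂ) with hddef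
  have hH : HasDerivAt H d (r:ℂ) := (hd.differentiableAt (isOpen_ball.mem_nhds hrball)).hasDerivAt
  have hcne := (my_strip_facts (hwlt _ hrball)).1
  have hFder : HasDerivAt F (1/Complex.cos (c * H (r:ℂ))^2 * (c * d)) (r:ℂ) :=
    by have := (Complex.hasDerivAt_tan hcne).comp (r:ℂ) (hH.const_mul c); exact this
  have hsp := my_schwarz_pick hFdiff hFmaps h0 h1
  rw [hFder.deriv] at hsp
  set w := c * H (r:ℂ) with hwdef
  have hkey := (my_strip_facts (hwlt _ hrball)).2.2
  have hnc : 0 < Complex.normSq (Complex.cos w) := Complex.normSq_pos.mpr hcne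
  have hnorm : ‖1/Complex.cos w^2 * (c * d)‖
      = (Complex.normSq (Complex.cos w))⁻¹ * (Real.pi/4 * ‖d‖) := by
    rw [norm_mul, norm_mul, norm_div, norm_one, norm_pow, hcdef]
    rw [Complex.norm_real, Real.norm_of_nonneg (by positivity : (0:ℝ) ≤ Real.pi/4)]
    rw [← Complex.sq_norm]
    ring
  rw [hnorm] at hsp
  -- multiply by normSq (cos w)
  have h2re : 2*w.re = Real.pi/2 * (H (r:ℂ)).re := by
    rw [hwdef, hwre]; ring
  have hfin : Real.pi/4 * ‖d‖ * (1 - r^2) ≤ Real.cos (2*w.re) := by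
    have := mul_le_mul_of_nonneg_right hsp hnc.le
    calc Real.pi/4 * ‖d‖ * (1 - r^2)
        = (Complex.normSq (Complex.cos w))⁻¹ * (Real.pi/4 * ‖d‖) * (1 - r^2)
            * Complex.normSq (Complex.cos w) := by
          field_simp
      _ ≤ (1 - Complex.normSq (F (r:ℂ))) * Complex.normSq (Complex.cos w) := this
      _ = Real.cos (2*w.re) := by rw [hFdef]; exact hkey
  rw [← h2re]
  linarith [hfin]


lemma my_tan_mono {H : ℂ → ℂ} (hd : DifferentiableOn ℂ H (ball 0 1))
    (hre : ∀ ζ ∈ ball (0:ℂ) 1, |(H ζ).re| < 1) {r : ℝ} (h0 : 0 ≤ r) (h1 : r < 1) :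
    (1 - r) * Real.tan (Real.pi/4 * (1 + (H ((r:ℝ):ℂ)).re))
      ≤ (1 + r) * Real.tan (Real.pi/4 * (1 + (H (((0:ℝ)):ℂ)).re)) := by
  have hpi := Real.pi_pos
  set ψ : ℝ → ℝ := fun t => (H ((t:ℝ):ℂ)).re with hψdef
  set Φ : ℝ → ℝ := fun t => (1 - t)/(1 + t) * Real.tan (Real.pi/4 * (1 + ψ t)) with hΦdef
  have hball : ∀ t : ℝ, 0 ≤ t → t < 1 → ((t:ℝ):ℂ) ∈ ball (0:ℂ) 1 := by
    intro t ht0 ht1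
    simp only [mem_ball_zero_iff, Complex.norm_real, Real.norm_eq_abs]
    rw [_root_.abs_of_nonneg ht0]; exact ht1
  have hψlt : ∀ t : ℝ, 0 ≤ t → t < 1 → |ψ t| < 1 := fun t ht0 ht1 => hre _ (hball t ht0 ht1)
  have hψder : ∀ t : ℝ, 0 ≤ t → t < 1 → HasDerivAt ψ ((deriv H (t:ℂ)).re) t := by
    intro t ht0 ht1
    exact ((hd.differentiableAt (isOpen_ball.mem_nhds (hball t ht0 ht1))).hasDerivAt).real_of_complex
  have hΦder : ∀ t : ℝ, 0 ≤ t → t < 1 → ∃ E : ℝ, HasDerivAt Φ E t ∧ E ≤ 0 := by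
    intro t ht0 ht1
    have hψt := hψlt t ht0 ht1
    rcases abs_lt.mp hψt with ⟨hψ1, hψ2⟩
    set u := Real.pi/4 * (1 + ψ t) with hudef
    have hu0 : 0 < u := by rw [hudef]; nlinarith
    have hu2 : u < Real.pi/2 := by rw [hudef]; nlinarith
    have hcosu : 0 < Real.cos u := Real.cos_pos_of_mem_Ioo ⟨by linarith, hu2⟩
    have hsinu : 0 < Real.sin u := Real.sin_pos_of_pos_of_lt_pi hu0 (by linarith)
    set dψ := (deriv H ((t:ℝ):ℂ)).re with hdψdef
    have h1' : HasDerivAt (fun s : ℝ => Real.pi/4 * (1 + ψ s)) (Real.pi/4 * dψ) t :=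
      (((hψder t ht0 ht1).const_add 1).const_mul (Real.pi/4))
    have htander : HasDerivAt (fun s : ℝ => Real.tan (Real.pi/4 * (1 + ψ s)))
        (1/Real.cos u^2 * (Real.pi/4 * dψ)) t :=
      by have := (Real.hasDerivAt_tan hcosu.ne').comp t h1'; exact this
    have hq : HasDerivAt (fun s : ℝ => (1 - s)/(1 + s)) (-2/(1+t)^2) t := by
      have hn : HasDerivAt (fun s : ℝ => 1 - s) (-1) t := by
        simpa using (hasDerivAt_id t).const_sub 1
      have hdd : HasDerivAt (fun s : ℝ => 1 + s) 1 t := by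
        simpa using (hasDerivAt_id t).const_add 1
      have hne : (1 + t) ≠ 0 := by linarith
      have := hn.div hdd hne
      refine this.congr_deriv ?_
      ring
    have hprod := hq.mul htander
    refine ⟨_, hprod, ?_⟩
    have hgrad := my_grad_bound hd hre ht0 ht1
    have hdψle : dψ ≤ ‖deriv H ((t:ℝ):ℂ)‖ := (abs_le.mp (Complex.abs_re_le_norm _)).2
    have hr2 : (0:ℝ) < 1 - t^2 := by nlinarith
    have hkey : Real.pi/4 * dψ * (1 - t^2) ≤ 2 * Real.sin u * Real.cos u := by
      have h2u : 2 * Real.sin u * Real.cos u = Real.cos (Real.pi/2 * ψ t) := by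
        rw [← Real.sin_two_mul]
        have : 2 * u = Real.pi/2 * ψ t + Real.pi/2 := by rw [hudef]; ring
        rw [this, Real.sin_add_pi_div_two]
      rw [h2u]
      calc Real.pi/4 * dψ * (1 - t^2)
          ≤ Real.pi/4 * (‖deriv H ((t:ℝ):ℂ)‖ * (1 - t^2)) := by
            have hh := mul_le_mul_of_nonneg_right hdψle hr2.le
            nlinarith [hh]
        _ ≤ Real.cos (Real.pi/2 * (H ((t:ℝ):ℂ)).re) := hgrad
        _ = Real.cos (Real.pi/2 * ψ t) := by rw [hψdef]
    have htaneq : Real.tan u = Real.sin u / Real.cos u := Real.tan_eq_sin_div_cos u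
    have hne1 : (1 + t) ≠ 0 := by linarith
    set E := -2/(1+t)^2 * Real.tan u + (1 - t)/(1 + t) * (1/Real.cos u^2 * (Real.pi/4 * dψ))
      with hEdef
    set D := (1+t)^2 * Real.cos u^2 with hDdef
    have hD : 0 < D := by positivity
    have hED : E * D = Real.pi/4 * dψ * (1 - t^2) - 2 * Real.sin u * Real.cos u := by
      rw [hEdef, hDdef, htaneq]
      field_simp
      ring
    have hEDle : E * D ≤ 0 := by rw [hED]; linarith
    nlinarith [hD, hEDle]
  -- antitone on [0, r]
  have hΦmono : Φ r ≤ Φ 0 := by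
    rcases eq_or_lt_of_le h0 with h | h
    · rw [← h]
    have hanti : AntitoneOn Φ (Icc 0 r) := by
      apply antitoneOn_of_deriv_nonpos (convex_Icc 0 r)
      · intro x hx
        obtain ⟨E, hE, _⟩ := hΦder x hx.1 (lt_of_le_of_lt hx.2 h1)
        exact hE.continuousAt.continuousWithinAt
      · intro x hx
        rw [interior_Icc] at hx
        obtain ⟨E, hE, _⟩ := hΦder x hx.1.le (lt_trans hx.2 h1)
        exact hE.differentiableAt.differentiableWithinAt
      · intro x hx
        rw [interior_Icc] at hx
        obtain ⟨E, hE, hE0⟩ := hΦder x hx.1.le (lt_trans hx.2 h1)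
        rw [hE.deriv]
        exact hE0
    exact hanti (left_mem_Icc.mpr h0) (right_mem_Icc.mpr h0) h0
  have hΦ0 : Φ 0 = Real.tan (Real.pi/4 * (1 + ψ 0)) := by
    rw [hΦdef]; norm_num
  have hΦr : Φ r = (1 - r)/(1 + r) * Real.tan (Real.pi/4 * (1 + ψ r)) := rfl
  have h1r : (0:ℝ) < 1 + r := by linarith
  rw [hΦr, hΦ0, div_mul_eq_mul_div, div_le_iff₀ h1r] at hΦmono
  calc (1 - r) * Real.tan (Real.pi/4 * (1 + (H ((r:ℝ):ℂ)).re))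
      = (1 - r) * Real.tan (Real.pi/4 * (1 + ψ r)) := rfl
    _ ≤ Real.tan (Real.pi/4 * (1 + ψ 0)) * (1 + r) := hΦmono
    _ = (1 + r) * Real.tan (Real.pi/4 * (1 + (H (((0:ℝ)):ℂ)).re)) := by
        rw [hψdef]; ring


lemma my_limit {ψ : ℝ → ℝ} {lam T : ℝ} (hT : 0 < T)
    (hder : HasDerivAt ψ lam 1) (hψ1 : ψ 1 = 1)
    (hrange : ∀ r : ℝ, 0 ≤ r → r < 1 → |ψ r| < 1)
    (hbound : ∀ r : ℝ, 0 ≤ r → r < 1 →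
      (1 - r) * Real.tan (Real.pi/4 * (1 + ψ r)) ≤ (1 + r) * T) :
    2/(Real.pi * T) ≤ lam := by
  have hpi := Real.pi_pos
  -- pointwise lower bound for the slope
  have hstep : ∀ r : ℝ, 0 ≤ r → r < 1 →
      (4/Real.pi) * Real.arctan ((1 - r)/((1 + r)*T)) ≤ 1 - ψ r := by
    intro r h0 h1
    rcases abs_lt.mp (hrange r h0 h1) with ⟨hm1, hm2⟩
    set θ := Real.pi/4 * (1 + ψ r) with hθdef
    have hθ0 : 0 < θ := by rw [hθdef]; nlinarith
    have hθ2 : θ < Real.pi/2 := by rw [hθdef]; nlinarith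
    set β := (1 + r)*T/(1 - r) with hβdef
    have hβ0 : 0 < β := div_pos (by nlinarith) (by linarith)
    have htanle : Real.tan θ ≤ β := by
      rw [hβdef, le_div_iff₀ (by linarith : (0:ℝ) < 1 - r)]
      calc Real.tan θ * (1 - r) = (1 - r) * Real.tan (Real.pi/4 * (1 + ψ r)) := by
            rw [hθdef]; ring
        _ ≤ (1 + r) * T := hbound r h0 h1
    have hθle : θ ≤ Real.arctan β := by
      calc θ = Real.arctan (Real.tan θ) := (Real.arctan_tan (by linarith) hθ2).symm
        _ ≤ Real.arctan β := Real.arctan_strictMono.monotone htanle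
    have hinv : Real.arctan (β⁻¹) = Real.pi/2 - Real.arctan β := Real.arctan_inv_of_pos hβ0
    have hβinv : β⁻¹ = (1 - r)/((1 + r)*T) := by rw [hβdef, inv_div]
    rw [← hβinv, hinv]
    have h4pi : (0:ℝ) < 4/Real.pi := by positivity
    have hmul : (4/Real.pi) * (Real.pi/4 * (1 + ψ r)) ≤ (4/Real.pi) * Real.arctan β :=
      mul_le_mul_of_nonneg_left hθle h4pi.le
    have heq : (4/Real.pi) * (Real.pi/4 * (1 + ψ r)) = 1 + ψ r := by field_simp
    have harith : (4/Real.pi) * (Real.pi/2 - Real.arctan β)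
        = 2 - (4/Real.pi) * Real.arctan β := by field_simp; ring
    rw [harith]
    rw [heq] at hmul
    linarith
  -- the slope tends to lam from the left
  have hslope : Tendsto (fun r => (1 - ψ r)/(1 - r)) (𝓝[<] (1:ℝ)) (𝓝 lam) := by
    have h := hasDerivAt_iff_tendsto_slope.mp hder
    have h2 : Tendsto (slope ψ 1) (𝓝[<] (1:ℝ)) (𝓝 lam) :=
      h.mono_left (nhdsWithin_mono 1 (fun x hx => ne_of_lt hx))
    apply h2.congr'
    filter_upwards [self_mem_nhdsWithin] with r hr
    have hne : r - 1 ≠ 0 := sub_ne_zero.mpr (ne_of_lt hr)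
    have hne2 : (1:ℝ) - r ≠ 0 := fun hc => hne (by linarith)
    rw [slope_def_field, hψ1, div_eq_div_iff hne hne2]
    ring
  -- the comparison function tends to 2/(π T)
  set x : ℝ → ℝ := fun r => (1 - r)/((1 + r)*T) with hxdef
  set R : ℝ → ℝ := fun r => (4/Real.pi) * Real.arctan (x r) / (1 - r) with hRdef
  have hIoo : Ioo (0:ℝ) 1 ∈ 𝓝[<] (1:ℝ) := Ioo_mem_nhdsLT_of_mem (by norm_num)
  have hRlim : Tendsto R (𝓝[<] (1:ℝ)) (𝓝 (2/(Real.pi * T))) := by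
    have hxlim : Tendsto x (𝓝[<] (1:ℝ)) (𝓝[≠] 0) := by
      have hc : Tendsto x (𝓝 (1:ℝ)) (𝓝 0) := by
        have hca : ContinuousAt x 1 := by
          apply ContinuousAt.div (by fun_prop) (by fun_prop)
          nlinarith
        have hx1 : x 1 = 0 := by rw [hxdef]; simp
        rw [← hx1]; exact hca.tendsto
      apply tendsto_nhdsWithin_of_tendsto_nhds_of_eventually_within _
        (hc.mono_left nhdsWithin_le_nhds)
      filter_upwards [hIoo] with r hr
      have : 0 < x r := by
        rw [hxdef]
        apply div_pos (by linarith [hr.2]) (by nlinarith [hr.1])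
      exact ne_of_gt this
    have harc : Tendsto (fun y => Real.arctan y / y) (𝓝[≠] (0:ℝ)) (𝓝 1) := by
      have h := hasDerivAt_iff_tendsto_slope.mp (Real.hasDerivAt_arctan 0)
      have h1 : (1:ℝ)/(1 + 0^2) = 1 := by norm_num
      rw [h1] at h
      apply h.congr'
      filter_upwards [self_mem_nhdsWithin] with y hy
      rw [slope_def_field]
      simp [Real.arctan_zero]
    have hcomp : Tendsto (fun r => Real.arctan (x r) / (x r)) (𝓝[<] (1:ℝ)) (𝓝 1) :=
      harc.comp hxlim
    have hcont : ContinuousAt (fun r : ℝ => (4/Real.pi) * ((1 + r)*T)⁻¹) 1 := by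
      apply ContinuousAt.mul continuousAt_const
      exact ContinuousAt.inv₀ (by fun_prop) (by nlinarith)
    have hden : Tendsto (fun r : ℝ => (4/Real.pi) * ((1 + r)*T)⁻¹) (𝓝[<] (1:ℝ))
        (𝓝 ((4/Real.pi) * (((1:ℝ) + 1)*T)⁻¹)) :=
      hcont.tendsto.mono_left nhdsWithin_le_nhds
    have hmul := hcomp.mul hden
    have hval : (1:ℝ) * ((4/Real.pi) * (((1:ℝ)+1)*T)⁻¹) = 2/(Real.pi*T) := by
      field_simp
      ring
    rw [hval] at hmul
    apply hmul.congr'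
    filter_upwards [hIoo] with r hr
    have h1r : (0:ℝ) < 1 - r := by linarith [hr.2]
    have hdenpos : (0:ℝ) < (1 + r)*T := by nlinarith [hr.1]
    have hx0 : x r ≠ 0 := ne_of_gt (div_pos h1r hdenpos)
    rw [hRdef]
    simp only
    rw [hxdef]
    have h1r' : (1:ℝ) + r ≠ 0 := by linarith [hr.1]
    field_simp
  -- conclude
  have hfinal : ∀ᶠ r in 𝓝[<] (1:ℝ), R r ≤ (1 - ψ r)/(1 - r) := by
    filter_upwards [hIoo] with r hr
    have h1r : (0:ℝ) < 1 - r := by linarith [hr.2]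
    rw [hRdef]
    simp only
    gcongr
    exact hstep r hr.1.le hr.2
  exact le_of_tendsto_of_tendsto hRlim hslope hfinal

end Aux

section Main
open Complex Filter Topology

theorem boundary_adjoint_lambda_bound {H₁ H₂ : Type*}
    [NormedAddCommGroup H₁] [InnerProductSpace ℂ H₁] [CompleteSpace H₁]
    [NormedAddCommGroup H₂] [InnerProductSpace ℂ H₂] [CompleteSpace H₂]
    (f : H₁ → H₂)
    (hph : ∀ (l : H₂ →L[ℂ] ℂ) (φ : ℂ → H₁), DifferentiableOn ℂ φ (ball 0 1) →
      MapsTo φ (ball 0 1) (ball 0 1) → IsHarmonicOnDisk (fun ζ => l (f (φ ζ))))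
    (hb : ∀ z ∈ ball (0:H₁) 1, ‖f z‖ < 1)
    (z₀ : H₁) (hz₀ : ‖z₀‖ = 1)
    (w₀ : H₂) (hfz₀ : f z₀ = w₀) (hw₀ : ‖w₀‖ = 1)
    (A : H₁ →L[ℝ] H₂) (hA : HasFDerivAt f A z₀)
    (lam : ℝ)
    (hlam : ∀ z : H₁, (inner ℂ w₀ (A z) : ℂ).re = lam * (inner ℂ z₀ z : ℂ).re) :
    lam ≥ max (2 / Real.pi - ‖f 0‖) ((1 - (inner ℂ (f 0) w₀ : ℂ).re) / 2) := by
  have hpi := Real.pi_pos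
  -- the harmonic function H on the disk
  have hφdiff : DifferentiableOn ℂ (fun ζ : ℂ => ζ • z₀) (ball 0 1) :=
    (differentiable_id.smul_const z₀).differentiableOn
  have hφmaps : MapsTo (fun ζ : ℂ => ζ • z₀) (ball 0 1) (ball (0:H₁) 1) := by
    intro ζ hζ
    rw [mem_ball_zero_iff] at *
    rw [norm_smul, hz₀, mul_one]
    exact hζ
  obtain ⟨h, g, hh, hg, heq⟩ := hph (innerSL ℂ w₀) (fun ζ : ℂ => ζ • z₀) hφdiff hφmaps
  set H : ℂ → ℂ := fun ζ => h ζ + g ζ with hHdef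
  have hHdiff : DifferentiableOn ℂ H (ball 0 1) := hh.add hg
  have hHre : ∀ ζ ∈ ball (0:ℂ) 1, (H ζ).re = (inner ℂ w₀ (f (ζ • z₀)) : ℂ).re := by
    intro ζ hζ
    have := heq ζ hζ
    simp only [innerSL_apply_apply] at this
    have h2 := congrArg Complex.re this
    simp only [Complex.add_re, Complex.conj_re] at h2
    rw [hHdef]
    simp only [Complex.add_re]
    linarith [h2]
  have hsmall : ∀ ζ ∈ ball (0:ℂ) 1, |(H ζ).re| < 1 := by
    intro ζ hζ
    rw [hHre ζ hζ]
    have h1 : |(inner ℂ w₀ (f (ζ • z₀)) : ℂ).re| ≤ ‖(inner ℂ w₀ (f (ζ • z₀)) : ℂ)‖ :=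
      Complex.abs_re_le_norm _
    have h2 : ‖(inner ℂ w₀ (f (ζ • z₀)) : ℂ)‖ ≤ ‖w₀‖ * ‖f (ζ • z₀)‖ := norm_inner_le_norm _ _
    have h3 : ‖f (ζ • z₀)‖ < 1 := hb _ (hφmaps hζ)
    rw [hw₀, one_mul] at h2
    linarith
  -- the radial function ψ
  set ψ : ℝ → ℝ := fun t => (inner ℂ w₀ (f (t • z₀)) : ℂ).re with hψdef
  have hψH : ∀ t : ℝ, 0 ≤ t → t < 1 → ψ t = (H ((t:ℝ):ℂ)).re := by
    intro t ht0 ht1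
    have htball : ((t:ℝ):ℂ) ∈ ball (0:ℂ) 1 := by
      simp only [mem_ball_zero_iff, Complex.norm_real, Real.norm_eq_abs]
      rw [_root_.abs_of_nonneg ht0]; exact ht1
    rw [hHre _ htball, hψdef]
    norm_num [Complex.coe_smul]
  -- derivative of ψ at 1
  have hsm : HasDerivAt (fun t : ℝ => t • z₀) z₀ 1 := by
    simpa using (hasDerivAt_id (1:ℝ)).smul_const z₀
  have hA1 : HasFDerivAt f A ((1:ℝ) • z₀) := by rwa [one_smul]
  have hcomp : HasDerivAt (fun t : ℝ => f (t • z₀)) (A z₀) 1 :=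
    hA1.comp_hasDerivAt 1 hsm
  set ℓ : H₂ →L[ℝ] ℝ := Complex.reCLM.comp ((innerSL ℂ w₀).restrictScalars ℝ) with hℓdef
  have hℓcomp : HasDerivAt (fun t : ℝ => ℓ (f (t • z₀))) (ℓ (A z₀)) 1 :=
    ℓ.hasFDerivAt.comp_hasDerivAt 1 hcomp
  have hℓψ : (fun t : ℝ => ℓ (f (t • z₀))) = ψ := by
    funext t
    rw [hℓdef, hψdef]
    simp [innerSL_apply_apply]
  have hAz₀ : ℓ (A z₀) = lam := by
    rw [hℓdef]
    simp only [ContinuousLinearMap.coe_comp', Function.comp_apply,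
      ContinuousLinearMap.coe_restrictScalars', Complex.reCLM_apply, innerSL_apply_apply]
    rw [hlam z₀, inner_self_eq_norm_sq_to_K (𝕜 := ℂ) z₀]
    simp [hz₀]
  have hψder : HasDerivAt ψ lam 1 := by
    rw [← hAz₀, ← hℓψ]
    exact hℓcomp
  have hψ1 : ψ 1 = 1 := by
    rw [hψdef]
    simp only [one_smul, hfz₀]
    rw [inner_self_eq_norm_sq_to_K (𝕜 := ℂ) w₀]
    simp [hw₀]
  -- the value a at the origin
  set a : ℝ := ψ 0 with hadef
  have hf0 : ‖f 0‖ < 1 := hb 0 (mem_ball_self one_pos)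
  have ha_eq : a = (inner ℂ w₀ (f 0) : ℂ).re := by
    rw [hadef, hψdef]
    simp only [zero_smul]
  have haabs : |a| ≤ ‖f 0‖ := by
    rw [ha_eq]
    calc |(inner ℂ w₀ (f 0) : ℂ).re| ≤ ‖(inner ℂ w₀ (f 0) : ℂ)‖ := Complex.abs_re_le_norm _
      _ ≤ ‖w₀‖ * ‖f 0‖ := norm_inner_le_norm _ _
      _ = ‖f 0‖ := by rw [hw₀, one_mul]
  have ham1 : -1 < a := by
    rcases abs_le.mp haabs with ⟨h1', _⟩; linarith
  have ham2 : a < 1 := by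
    rcases abs_le.mp haabs with ⟨_, h2'⟩; linarith
  set θa := Real.pi/4*(1+a) with hθadef
  have hθa0 : 0 < θa := by rw [hθadef]; nlinarith
  have hθa2 : θa < Real.pi/2 := by rw [hθadef]; nlinarith
  have hsin : 0 < Real.sin θa := Real.sin_pos_of_pos_of_lt_pi hθa0 (by linarith)
  have hcos : 0 < Real.cos θa := Real.cos_pos_of_mem_Ioo ⟨by linarith, hθa2⟩
  set T := Real.tan θa with hTdef
  have hT : 0 < T := Real.tan_pos_of_pos_of_lt_pi_div_two hθa0 hθa2
  -- hypotheses of my_limit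
  have hrange : ∀ r : ℝ, 0 ≤ r → r < 1 → |ψ r| < 1 := by
    intro r h0 h1
    rw [hψH r h0 h1]
    apply hsmall
    simp only [mem_ball_zero_iff, Complex.norm_real, Real.norm_eq_abs]
    rw [_root_.abs_of_nonneg h0]; exact h1
  have hbound : ∀ r : ℝ, 0 ≤ r → r < 1 →
      (1 - r) * Real.tan (Real.pi/4 * (1 + ψ r)) ≤ (1 + r) * T := by
    intro r h0 h1
    have hmono := my_tan_mono hHdiff hsmall h0 h1
    rw [← hψH r h0 h1, ← hψH 0 le_rfl one_pos] at hmono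
    rw [hTdef, hθadef, hadef]
    exact hmono
  have hlim : 2/(Real.pi * T) ≤ lam := my_limit hT hψder hψ1 hrange hbound
  -- final arithmetic
  have h2piT : 2/(Real.pi * T) = (2/Real.pi) * (Real.cos θa / Real.sin θa) := by
    rw [hTdef, Real.tan_eq_sin_div_cos]
    field_simp
  have hc1 := my_cot1 hθa0 hθa2
  have hc2 := my_cot2 hθa0 hθa2
  have hbnd1 : 2/Real.pi - a ≤ 2/(Real.pi*T) := by
    rw [h2piT]
    have he1 : 1 + Real.pi/2 - 2*θa = 1 - Real.pi/2 * a := by rw [hθadef]; ring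
    rw [he1] at hc1
    calc 2/Real.pi - a = (2/Real.pi) * (1 - Real.pi/2 * a) := by field_simp
      _ ≤ (2/Real.pi) * (Real.cos θa / Real.sin θa) :=
          mul_le_mul_of_nonneg_left hc1 (by positivity)
  have hbnd2 : (1 - a)/2 ≤ 2/(Real.pi*T) := by
    rw [h2piT]
    have he2 : Real.pi/2 - θa = Real.pi/4 * (1 - a) := by rw [hθadef]; ring
    rw [he2] at hc2
    calc (1 - a)/2 = (2/Real.pi) * (Real.pi/4 * (1 - a)) := by field_simp; ring
      _ ≤ (2/Real.pi) * (Real.cos θa / Real.sin θa) :=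
          mul_le_mul_of_nonneg_left hc2 (by positivity)
  have hare : (inner ℂ (f 0) w₀ : ℂ).re = a := by
    have hconj : (inner ℂ (f 0) w₀ : ℂ) = (starRingEnd ℂ) (inner ℂ w₀ (f 0) : ℂ) :=
      (inner_conj_symm _ _).symm
    rw [ha_eq, hconj, Complex.conj_re]
  rw [ge_iff_le, max_le_iff]
  constructor
  · have : 2/Real.pi - ‖f 0‖ ≤ 2/Real.pi - a := by
      rcases abs_le.mp haabs with ⟨_, h2'⟩; linarith
    linarith
  · rw [hare]
    linarith

end Main
end
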